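/- arXiv:1504.06617 — 2 statements merged into one kernel-verified Lean document; each statement's English description precedes it below -/
import Mathlib

section
/- Let V be a finite-dimensional complex vector space of dimension n and A : V → V a conjugate-linear map with A ∘ A = id. Then, viewing A as an ℝ-linear endomorphism of the underlying real vector space of V (which has real dimension 2n), the real determinant of A equals (−1)^n. -/
open Module LinearMap

lemma det_prodMap_aux {K M N : Type*} [Field K] [AddCommGroup M] [Module K M]
    [AddCommGroup N] [Module K N] [FiniteDimensional K M] [FiniteDimensional K N]
    (f : M →ₗ[K] M) (g : N →ₗ[K] N) :
    LinearMap.det (f.prodMap g) = LinearMap.det f * LinearMap.det g := by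
  classical
  let b := Module.finBasis K M
  let c := Module.finBasis K N
  rw [← LinearMap.det_toMatrix (b.prod c), LinearMap.toMatrix_prodMap,
    Matrix.det_fromBlocks_zero₂₁, LinearMap.det_toMatrix, LinearMap.det_toMatrix]

/-- If `A` is a conjugate-linear involution of an `n`-dimensional complex
vector space `V`, then the determinant of `A` as an `ℝ`-linear endomorphism of the
underlying real vector space equals `(-1)^n`. -/
theorem stmt2 {V : Type*} [AddCommGroup V] [Module ℂ V] [FiniteDimensional ℂ V]
    [Module ℝ V] [IsScalarTower ℝ ℂ V]
    (A : V →ₗ[ℝ] V)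
    (hconj : ∀ (c : ℂ) (v : V), A (c • v) = (starRingEnd ℂ) c • A v)
    (hinv : ∀ v : V, A (A v) = v) :
    LinearMap.det A = (-1) ^ (Module.finrank ℂ V) := by
  classical
  have hFD : FiniteDimensional ℝ V := Module.Finite.trans (R := ℝ) ℂ V
  -- fixed and anti-fixed subspaces
  set W : Submodule ℝ V := LinearMap.ker (A - LinearMap.id) with hW
  set W' : Submodule ℝ V := LinearMap.ker (A + LinearMap.id) with hW'
  have hmemW : ∀ v : V, v ∈ W ↔ A v = v := by
    intro v
    simp [hW, LinearMap.mem_ker, sub_eq_zero]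
  have hmemW' : ∀ v : V, v ∈ W' ↔ A v = -v := by
    intro v
    simp [hW', LinearMap.mem_ker, add_eq_zero_iff_eq_neg]
  have hcompl : IsCompl W W' := by
    constructor
    · rw [disjoint_iff_inf_le]
      intro v hv
      have h1 : A v = v := (hmemW v).1 hv.1
      have h2 : A v = -v := (hmemW' v).1 hv.2
      have : (2 : ℝ) • v = 0 := by
        rw [two_smul]
        rw [h1] at h2
        rwa [eq_neg_iff_add_eq_zero] at h2
      have := congrArg (fun x => (2 : ℝ)⁻¹ • x) this
      simpa [smul_smul] using this
    · rw [codisjoint_iff, eq_top_iff]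
      intro v _
      have : v = (2 : ℝ)⁻¹ • (v + A v) + (2 : ℝ)⁻¹ • (v - A v) := by
        rw [← smul_add]
        rw [show v + A v + (v - A v) = (2 : ℝ) • v by rw [two_smul]; abel]
        rw [smul_smul]; norm_num
      rw [this]
      apply Submodule.add_mem_sup
      · rw [hmemW]
        simp [map_add, hinv v, add_comm]
      · rw [hmemW']
        simp [map_sub, hinv v, smul_sub, neg_sub]
  -- the two eigenspaces have the same dimension, via multiplication by I
  letI : SMulCommClass ℝ ℂ V := ⟨fun r c v => by
    rw [← IsScalarTower.algebraMap_smul ℂ r v, ← IsScalarTower.algebraMap_smul ℂ r (c • v),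
      smul_smul, smul_smul, mul_comm]⟩
  have hIW : ∀ v : V, v ∈ W → Complex.I • v ∈ W' := by
    intro v hv
    rw [hmemW'] at *
    rw [hconj, (hmemW v).1 hv]
    simp
  have hIW' : ∀ v : V, v ∈ W' → (-Complex.I) • v ∈ W := by
    intro v hv
    rw [hmemW]
    rw [hconj, (hmemW' v).1 hv]
    simp
  let J : W ≃ₗ[ℝ] W' :=
    { toFun := fun w => ⟨Complex.I • (w : V), hIW _ w.2⟩
      invFun := fun w => ⟨(-Complex.I) • (w : V), hIW' _ w.2⟩
      map_add' := fun x y => by ext; simp [smul_add]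
      map_smul' := fun r x => by ext; simp [smul_comm r Complex.I]
      left_inv := fun x => by ext; simp [smul_smul]
      right_inv := fun x => by ext; simp [smul_smul] }
  have hdim : finrank ℝ W' = finrank ℂ V := by
    have h1 : finrank ℝ W + finrank ℝ W' = finrank ℝ V :=
      Submodule.finrank_add_eq_of_isCompl hcompl
    have h2 : finrank ℝ W = finrank ℝ W' := J.finrank_eq
    have h3 : finrank ℝ ℂ * finrank ℂ V = finrank ℝ V :=
      Module.finrank_mul_finrank ℝ ℂ V
    rw [Complex.finrank_real_complex] at h3
    omega
  -- conjugate A to a product map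
  let e : (W × W') ≃ₗ[ℝ] V := Submodule.prodEquivOfIsCompl W W' hcompl
  let f : (W × W') →ₗ[ℝ] (W × W') :=
    LinearMap.prodMap (LinearMap.id : W →ₗ[ℝ] W) (-LinearMap.id : W' →ₗ[ℝ] W')
  have hA : A = (e : (W × W') →ₗ[ℝ] V) ∘ₗ f ∘ₗ (e.symm : V →ₗ[ℝ] (W × W')) := by
    have key : A ∘ₗ (e : (W × W') →ₗ[ℝ] V) = (e : (W × W') →ₗ[ℝ] V) ∘ₗ f := by
      ext x
      · simp only [LinearMap.comp_apply, LinearMap.coe_comp, Function.comp_apply]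
        simp [e, f, Submodule.coe_prodEquivOfIsCompl, (hmemW _).1 x.2]
      · simp only [LinearMap.comp_apply, LinearMap.coe_comp, Function.comp_apply]
        simp [e, f, Submodule.coe_prodEquivOfIsCompl, (hmemW' _).1 x.2]
    ext v
    have hk := LinearMap.congr_fun key (e.symm v)
    simp only [LinearMap.comp_apply, LinearEquiv.coe_coe, LinearEquiv.apply_symm_apply] at hk ⊢
    exact hk
  rw [hA, LinearMap.det_conj f e]
  have : LinearMap.det f = (-1 : ℝ) ^ finrank ℝ W' := by
    rw [det_prodMap_aux, LinearMap.det_id, one_mul]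
    rw [show (-LinearMap.id : W' →ₗ[ℝ] W') = (-1 : ℝ) • LinearMap.id from
      (neg_one_smul ℝ (LinearMap.id : W' →ₗ[ℝ] W')).symm]
    rw [LinearMap.det_smul, LinearMap.det_id, mul_one]
  rw [this, hdim]
end

section
/- Let ℓ ⊂ ℝ² be a 1-dimensional linear subspace. Then the ℝ-linear map ℓ × ℓ → ℝ² sending ((x₁, y₁), (x₂, y₂)) ↦ (x₁ − y₂, x₂ + y₁) is a linear isomorphism. (This realizes the explicit trivialization γ ⊕ γ ≅ ℝℙ¹ × ℝ² of the double of the tautological line bundle over ℝℙ¹.) -/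
/-- For any 1-dimensional subspace `ℓ ⊂ ℝ²`, the linear map
`ℓ × ℓ → ℝ²`, `((x₁,y₁),(x₂,y₂)) ↦ (x₁ - y₂, x₂ + y₁)`, is a linear isomorphism
(the explicit trivialization `γ ⊕ γ ≅ ℝℙ¹ × ℝ²` of the double of the tautological
line bundle). -/
theorem stmt9 (ℓ : Submodule ℝ (ℝ × ℝ)) (hℓ : Module.finrank ℝ ℓ = 1) :
    Function.Bijective (fun p : ℓ × ℓ =>
      (((p.1 : ℝ × ℝ).1 - (p.2 : ℝ × ℝ).2, (p.2 : ℝ × ℝ).1 + (p.1 : ℝ × ℝ).2) : ℝ × ℝ)) := by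
  obtain ⟨v, hv, hgen⟩ := finrank_eq_one_iff'.mp hℓ
  set a : ℝ := (v : ℝ × ℝ).1 with ha
  set b : ℝ := (v : ℝ × ℝ).2 with hb
  have hvne : (v : ℝ × ℝ) ≠ 0 := fun h => hv (Subtype.ext h)
  have hd : a ^ 2 + b ^ 2 ≠ 0 := by
    intro h
    apply hvne
    have ha0 : a = 0 := by nlinarith [sq_nonneg a, sq_nonneg b]
    have hb0 : b = 0 := by nlinarith [sq_nonneg a, sq_nonneg b]
    exact Prod.ext ha0 hb0
  have coords : ∀ (c : ℝ), ((c • v : ℓ) : ℝ × ℝ) = (c * a, c * b) := by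
    intro c
    simp [Prod.ext_iff, ha, hb]
  constructor
  · rintro ⟨p1, p2⟩ ⟨q1, q2⟩ heq
    obtain ⟨s1, hs1⟩ := hgen p1
    obtain ⟨s2, hs2⟩ := hgen p2
    obtain ⟨t1, ht1⟩ := hgen q1
    obtain ⟨t2, ht2⟩ := hgen q2
    simp only [Prod.ext_iff] at heq
    rw [← hs1, ← hs2, ← ht1, ← ht2] at heq
    simp only [coords] at heq
    obtain ⟨h1, h2⟩ := heq
    have k1 : (s1 - t1) * (a ^ 2 + b ^ 2) = 0 := by linear_combination a * h1 + b * h2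
    have k2 : (s2 - t2) * (a ^ 2 + b ^ 2) = 0 := by linear_combination a * h2 - b * h1
    have e1 : s1 = t1 := by
      rcases mul_eq_zero.mp k1 with h | h
      · linarith
      · exact absurd h hd
    have e2 : s2 = t2 := by
      rcases mul_eq_zero.mp k2 with h | h
      · linarith
      · exact absurd h hd
    refine Prod.ext ?_ ?_ <;> simp only
    · rw [← hs1, ← ht1, e1]
    · rw [← hs2, ← ht2, e2]
  · rintro ⟨u, w⟩
    refine ⟨(((u * a + w * b) / (a ^ 2 + b ^ 2)) • v,
            ((w * a - u * b) / (a ^ 2 + b ^ 2)) • v), ?_⟩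
    simp only [coords, Prod.ext_iff]
    constructor <;> field_simp <;> ring
end
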